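/- The FOMC-sentence ξX.∀x.¿X?x is valid: for every genealogical Kripke model M and every world s ∈ S_M, we have M, s ⊨ ξX.∀x.¿X?x. -/
import Mathlib


set_option linter.unusedVariables false

/-! Genealogical Kripke models and first-order modal ξ-calculus (FOMC). -/

/-- A genealogical Kripke model over a fixed type `W` of possible worlds,
propositional letters `P` and constant symbols `C`.  The children models are
given by an index type `ι` with a family `child : ι → GKM W P C`. -/
inductive GKM (W P C : Type) : Type 1 where
  | mk (S : Set W) (Sne : S.Nonempty) (R : W → W → Prop) (V : P → Set W)
      (ι : Type) (child : ι → GKM W P C)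
      (I : W → C → Option ι) (T : W → ι → W) : GKM W P C

namespace GKM

variable {W P C : Type}

def S : GKM W P C → Set W
  | .mk S _ _ _ _ _ _ _ => S

def R : GKM W P C → W → W → Prop
  | .mk _ _ R _ _ _ _ _ => R

def V : GKM W P C → P → Set W
  | .mk _ _ _ V _ _ _ _ => V

/-- The index type of the set of children models. -/
def Idx : GKM W P C → Type
  | .mk _ _ _ _ ι _ _ _ => ι

def child : (M : GKM W P C) → M.Idx → GKM W P C
  | .mk _ _ _ _ _ c _ _ => c

def I : (M : GKM W P C) → W → C → Option M.Idx
  | .mk _ _ _ _ _ _ I _ => I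

def T : (M : GKM W P C) → W → M.Idx → W
  | .mk _ _ _ _ _ _ _ T => T

/-- `IsChild M' M` : `M'` is a member of the set `N_M` of children models of `M`. -/
def IsChild (M' M : GKM W P C) : Prop := ∃ a, M.child a = M'

theorem acc_isChild (M : GKM W P C) : Acc IsChild M := by
  induction M with
  | mk S ne R V ι c I T ih =>
    refine Acc.intro _ fun M' h => ?_
    obtain ⟨a, ha⟩ := h
    subst ha
    exact ih a

theorem isChild_wf : WellFounded (@IsChild W P C) := ⟨acc_isChild⟩

instance : WellFoundedRelation (GKM W P C) :=
  ⟨Relation.TransGen IsChild, isChild_wf.transGen⟩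

/-- Hereditary well-formedness: `R ⊆ S × S` and `T(s,N') ∈ S_{N'}`, recursively. -/
def WF (M : GKM W P C) : Prop :=
  (∀ u u', M.R u u' → u ∈ M.S ∧ u' ∈ M.S) ∧
  (∀ s ∈ M.S, ∀ a : M.Idx, M.T s a ∈ (M.child a).S) ∧
  (∀ a : M.Idx, WF (M.child a))
termination_by M
decreasing_by exact Relation.TransGen.single ⟨_, rfl⟩

/-- Finitely many children, hereditarily. -/
def ChildFin (M : GKM W P C) : Prop :=
  Finite M.Idx ∧ ∀ a : M.Idx, ChildFin (M.child a)
termination_by M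
decreasing_by exact Relation.TransGen.single ⟨_, rfl⟩

/-- Image-finite genealogical Kripke model. -/
def ImageFinite (M : GKM W P C) : Prop :=
  (∀ s ∈ M.S, {t | M.R s t}.Finite) ∧ Finite M.Idx ∧
    ∀ a : M.Idx, ImageFinite (M.child a)
termination_by M
decreasing_by exact Relation.TransGen.single ⟨_, rfl⟩

end GKM

/-- Formulas of first-order modal ξ-calculus.  Model variables and formula
variables are both encoded as natural numbers (in separate namespaces).
`qmv φ x` is `¿φ?x`, `qmc φ c` is `¿φ?c`, `all x φ` is `∀x.φ` and
`xi X φ` is `ξX.φ`. -/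
inductive Fm (P C : Type) : Type where
  | fvar : ℕ → Fm P C
  | top : Fm P C
  | prop : P → Fm P C
  | qmv : Fm P C → ℕ → Fm P C
  | qmc : Fm P C → C → Fm P C
  | neg : Fm P C → Fm P C
  | and : Fm P C → Fm P C → Fm P C
  | box : Fm P C → Fm P C
  | all : ℕ → Fm P C → Fm P C
  | xi : ℕ → Fm P C → Fm P C

namespace Fm

variable {P C : Type}

/-- `∃x.φ := ¬∀x.¬φ`. -/
def exi (x : ℕ) (φ : Fm P C) : Fm P C := .neg (.all x (.neg φ))

/-- `◇φ := ¬□¬φ`. -/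
def dia (φ : Fm P C) : Fm P C := .neg (.box (.neg φ))

/-- Free model variables. -/
def fmv : Fm P C → Finset ℕ
  | .fvar _ => ∅
  | .top => ∅
  | .prop _ => ∅
  | .qmv φ x => fmv φ ∪ {x}
  | .qmc φ _ => fmv φ
  | .neg φ => fmv φ
  | .and φ ψ => fmv φ ∪ fmv ψ
  | .box φ => fmv φ
  | .all x φ => fmv φ \ {x}
  | .xi _ φ => fmv φ

/-- Formula variables with a free occurrence *outside* every `¿ ?` pair.
Such occurrences are never bound by `ξ`. -/
def ffvOut : Fm P C → Finset ℕ
  | .fvar X => {X}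
  | .top => ∅
  | .prop _ => ∅
  | .qmv _ _ => ∅
  | .qmc _ _ => ∅
  | .neg φ => ffvOut φ
  | .and φ ψ => ffvOut φ ∪ ffvOut ψ
  | .box φ => ffvOut φ
  | .all _ φ => ffvOut φ
  | .xi _ φ => ffvOut φ

/-- Formula variables with a free occurrence *inside* some `¿ ?` pair
(these are the occurrences a surrounding `ξX.` can bind). -/
def ffvIn : Fm P C → Finset ℕ
  | .fvar _ => ∅
  | .top => ∅
  | .prop _ => ∅
  | .qmv φ _ => ffvOut φ ∪ ffvIn φ
  | .qmc φ _ => ffvOut φ ∪ ffvIn φ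
  | .neg φ => ffvIn φ
  | .and φ ψ => ffvIn φ ∪ ffvIn ψ
  | .box φ => ffvIn φ
  | .all _ φ => ffvIn φ
  | .xi X φ => ffvIn φ \ {X}

/-- Free formula variables. -/
def ffv (φ : Fm P C) : Finset ℕ := ffvOut φ ∪ ffvIn φ

/-- The extra subformula conditions of Definition 2.3. -/
def Good : Fm P C → Prop
  | .fvar _ => True
  | .top => True
  | .prop _ => True
  | .qmv φ _ => fmv φ = ∅ ∧ Good φ
  | .qmc φ _ => fmv φ = ∅ ∧ Good φ
  | .neg φ => Good φ
  | .and φ ψ => Good φ ∧ Good ψ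
  | .box φ => Good φ
  | .all _ φ => Good φ
  | .xi X φ => fmv (Fm.xi X φ) = ∅ ∧ ffv (Fm.xi X φ) = ∅ ∧ Good φ

/-- FOMC-sentences (Definition 2.3). -/
def IsSentence (φ : Fm P C) : Prop := fmv φ = ∅ ∧ ffv φ = ∅ ∧ Good φ

end Fm

namespace GKM

variable {W P C : Type}

mutual

/-- Semantics (Definition 2.11).  `i` interprets model variables as children
models of the current model (via their indices), and `j` interprets formula
variables semantically, as maps assigning to each genealogical Kripke model a
set of worlds. -/
def eval : (φ : Fm P C) → (M : GKM W P C) → (ℕ → Option M.Idx) →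
    (ℕ → Option (GKM W P C → Set W)) → Set W
  | .fvar X, M, _, j => M.S ∩ ((j X).elim ∅ fun F => F M)
  | .top, M, _, _ => M.S
  | .prop p, M, _, _ => M.S ∩ M.V p
  | .qmv φ x, M, i, j =>
      {s | s ∈ M.S ∧ ∃ a, i x = some a ∧
        M.T s a ∈ eval φ (M.child a) (fun _ => none) j}
  | .qmc φ c, M, _, j =>
      {s | s ∈ M.S ∧ ∃ a, M.I s c = some a ∧
        M.T s a ∈ eval φ (M.child a) (fun _ => none) j}
  | .neg φ, M, i, j => M.S \ eval φ M i j
  | .and φ ψ, M, i, j => eval φ M i j ∩ eval ψ M i j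
  | .box φ, M, i, j => {s | s ∈ M.S ∧ ∀ t, M.R s t → t ∈ eval φ M i j}
  | .all x φ, M, i, j =>
      {s | s ∈ M.S ∧ ∀ a : M.Idx, s ∈ eval φ M (Function.update i x (some a)) j}
  | .xi X φ, M, i, j => eval φ M i (Function.update j X (some (fun N => xiClosure φ X j N)))
  termination_by φ M i j => (sizeOf φ, 1)

/-- The semantic value bound to `X` by `ξX.φ` under environment `j`: the
(depth-guarded) fixed point `F` with `F N = ⟦φ⟧^N_{∅, j[X:=F]}`. -/
def xiClosure (φ : Fm P C) (X : ℕ) (j : ℕ → Option (GKM W P C → Set W))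
    (N₀ : GKM W P C) : Set W :=
  WellFounded.fix (isChild_wf.transGen)
    (fun N rec =>
      eval φ N (fun _ => none) (Function.update j X (some fun N' =>
        @dite (Set W) (Relation.TransGen IsChild N' N) (Classical.dec _)
          (fun h => rec N' h) (fun _ => ∅))))
    N₀
  termination_by (sizeOf φ, 2)

end

/-- `M,s ⊨ φ` : truth of the FOMC-sentence `φ` at the pointed model `M,s`. -/
def Sat (M : GKM W P C) (s : W) (φ : Fm P C) : Prop :=
  s ∈ eval φ M (fun _ => none) (fun _ => none)

/-- Environments arising from binding sentences `ξX.ψ` (used for the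
intermediate stages of evaluating an FOMC-sentence). -/
inductive GoodEnv : (ℕ → Option (GKM W P C → Set W)) → Prop where
  | nil : GoodEnv (fun _ => none)
  | cons {j : ℕ → Option (GKM W P C → Set W)} {X : ℕ} {ψ : Fm P C} :
      GoodEnv j → (Fm.xi X ψ).IsSentence →
      GoodEnv (Function.update j X (some (xiClosure ψ X j)))

/-- Bisimilarity of pointed genealogical Kripke models (Definition 4.2). -/
def Bisim (M : GKM W P C) (s : W) (N : GKM W P C) (t : W) : Prop :=
  ∃ (Z : W → W → Prop) (f : W → W → M.Idx → N.Idx → Prop),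
    Z s t ∧
    (∀ u v, Z u v → u ∈ M.S ∧ v ∈ N.S) ∧
    (∀ u v, Z u v → ∀ p : P, u ∈ M.V p ↔ v ∈ N.V p) ∧
    (∀ u v, Z u v → ∀ a : M.Idx, ∃ b : N.Idx, f u v a b) ∧
    (∀ u v, Z u v → ∀ b : N.Idx, ∃ a : M.Idx, f u v a b) ∧
    (∀ u v, Z u v → ∀ a b, f u v a b →
      Bisim (M.child a) (M.T u a) (N.child b) (N.T v b)) ∧
    (∀ u v, Z u v → ∀ c : C,
      (M.I u c = none ∧ N.I v c = none) ∨
      (∃ a b, M.I u c = some a ∧ N.I v c = some b ∧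
        Bisim (M.child a) (M.T u a) (N.child b) (N.T v b))) ∧
    (∀ u v, Z u v → ∀ u', M.R u u' →
      ∃ v', N.R v v' ∧ Z u' v' ∧ ∀ a b, f u v a b → f u' v' a b) ∧
    (∀ u v, Z u v → ∀ v', N.R v v' →
      ∃ u', M.R u u' ∧ Z u' v' ∧ ∀ a b, f u v a b → f u' v' a b)
termination_by M
decreasing_by all_goals exact Relation.TransGen.single ⟨_, rfl⟩

/-- The conditions of Definition 4.2 for a specific pair `(Z, f)` of witnesses. -/
def IsBisim (M N : GKM W P C) (Z : W → W → Prop)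
    (f : W → W → M.Idx → N.Idx → Prop) : Prop :=
  (∀ u v, Z u v → u ∈ M.S ∧ v ∈ N.S) ∧
  (∀ u v, Z u v → ∀ p : P, u ∈ M.V p ↔ v ∈ N.V p) ∧
  (∀ u v, Z u v → ∀ a : M.Idx, ∃ b : N.Idx, f u v a b) ∧
  (∀ u v, Z u v → ∀ b : N.Idx, ∃ a : M.Idx, f u v a b) ∧
  (∀ u v, Z u v → ∀ a b, f u v a b →
    Bisim (M.child a) (M.T u a) (N.child b) (N.T v b)) ∧
  (∀ u v, Z u v → ∀ c : C,
    (M.I u c = none ∧ N.I v c = none) ∨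
    (∃ a b, M.I u c = some a ∧ N.I v c = some b ∧
      Bisim (M.child a) (M.T u a) (N.child b) (N.T v b))) ∧
  (∀ u v, Z u v → ∀ u', M.R u u' →
    ∃ v', N.R v v' ∧ Z u' v' ∧ ∀ a b, f u v a b → f u' v' a b) ∧
  (∀ u v, Z u v → ∀ v', N.R v v' →
    ∃ u', M.R u u' ∧ Z u' v' ∧ ∀ a b, f u v a b → f u' v' a b)

/-- `n`-fold relational composition. -/
def relPow (r : W → W → Prop) : ℕ → W → W → Prop
  | 0 => fun a b => a = b
  | n + 1 => fun a c => ∃ b, relPow r n a b ∧ r b c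

/-- Standard Kripke semantics on the frame `(S_M, R_M)` with valuation `V_M`
(meaningful for pure propositional modal formulas). -/
def kEval (M : GKM W P C) : Fm P C → Set W
  | .top => M.S
  | .prop p => M.S ∩ M.V p
  | .neg φ => M.S \ kEval M φ
  | .and φ ψ => kEval M φ ∩ kEval M ψ
  | .box φ => {s | s ∈ M.S ∧ ∀ t, M.R s t → t ∈ kEval M φ}
  | _ => ∅

end GKM

/-- Pure propositional modal formulas. -/
def Fm.Pure {P C : Type} : Fm P C → Prop
  | .top => True
  | .prop _ => True
  | .neg φ => Pure φ
  | .and φ ψ => Pure φ ∧ Pure ψ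
  | .box φ => Pure φ
  | _ => False

theorem GKM.xiClosure_eq {W P C : Type} (φ : Fm P C) (X : ℕ)
    (j : ℕ → Option (GKM W P C → Set W)) (N : GKM W P C) :
    GKM.xiClosure φ X j N =
      GKM.eval φ N (fun _ => none) (Function.update j X (some fun N' =>
        @dite (Set W) (Relation.TransGen GKM.IsChild N' N) (Classical.dec _)
          (fun _ => GKM.xiClosure φ X j N') (fun _ => ∅))) := by
  simp only [GKM.xiClosure]
  rw [WellFounded.fix_eq]

theorem GKM.wf_child {W P C : Type} {M : GKM W P C} (h : M.WF) (a : M.Idx) :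
    (M.child a).WF := by
  rw [GKM.WF] at h
  exact h.2.2 a

theorem GKM.wf_T {W P C : Type} {M : GKM W P C} (h : M.WF) {s : W} (hs : s ∈ M.S)
    (a : M.Idx) : M.T s a ∈ (M.child a).S := by
  rw [GKM.WF] at h
  exact h.2.1 s hs a

theorem stmt5_key {W P C : Type} (j : ℕ → Option (GKM W P C → Set W))
    (N : GKM W P C) (hWF : N.WF) :
    ∀ s ∈ N.S, s ∈ GKM.xiClosure (Fm.all 0 (Fm.qmv (Fm.fvar 0) 0)) 0 j N := by
  induction N using (GKM.isChild_wf (W := W) (P := P) (C := C)).transGen.induction with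
  | _ N ih =>
    intro s hs
    rw [GKM.xiClosure_eq, GKM.eval]
    refine ⟨hs, fun a => ?_⟩
    rw [GKM.eval]
    refine ⟨hs, a, by simp [Function.update], ?_⟩
    rw [GKM.eval]
    have hchild : Relation.TransGen GKM.IsChild (N.child a) N :=
      Relation.TransGen.single ⟨a, rfl⟩
    have hT := GKM.wf_T hWF hs a
    refine ⟨hT, ?_⟩
    simp only [Function.update_self, Option.elim, dif_pos hchild]
    exact ih (N.child a) hchild (GKM.wf_child hWF a) _ hT

/-- the FOMC-sentence `ξX.∀x.¿X?x` is valid: it holds at every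
world of every (well-formed) genealogical Kripke model. -/
theorem stmt5 {W P C : Type} (M : GKM W P C) (hWF : M.WF) (s : W) (hs : s ∈ M.S) :
    GKM.Sat M s (Fm.xi 0 (Fm.all 0 (Fm.qmv (Fm.fvar 0) 0))) := by
  rw [GKM.Sat, GKM.eval]
  rw [GKM.eval]
  refine ⟨hs, fun a => ?_⟩
  rw [GKM.eval]
  refine ⟨hs, a, by simp [Function.update], ?_⟩
  rw [GKM.eval]
  have hT := GKM.wf_T hWF hs a
  refine ⟨hT, ?_⟩
  simp only [Function.update_self, Option.elim]
  exact stmt5_key _ _ (GKM.wf_child hWF a) _ hT
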